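/- arXiv:1108.4092 — 4 statements merged into one kernel-verified Lean document; each statement's English description precedes it below -/
import Mathlib

section
/- Let Γ = (V,E) be an infinite connected simple graph with path metric d, let s be a natural number such that ρ(v) ≤ s for all v ∈ V, let (aₙ)ₙ∈ℕ be an arrow in Γ, and let A = {aₙ : n ∈ ℕ}. Then the following statements are equivalent: (i) Γ is an asymptotic ray; (ii) there exists a natural number r such that V = B(A,r); (iii) there exists a natural number α such that for every n ∈ ℕ there is a vertex x with S(a₀,n) ⊆ B(x,α) (the family {S(a₀,n) : n ∈ ℕ} is uniformly bounded). -/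
/-- `a` is an arrow in `G`: an injective sequence of vertices with consecutive terms
adjacent and `d(a 0, a n) = n` for all `n`. -/
def IsArrow {V : Type*} (G : SimpleGraph V) (a : ℕ → V) : Prop :=
  Function.Injective a ∧ ∀ n : ℕ, G.Adj (a n) (a (n + 1)) ∧ G.dist (a 0) (a n) = n

/-- `G` is an asymptotic ray: there is a bijection `f : V → ℕ` and naturals `m, m'` with
`|f u - f v| ≤ m * d(u,v)` and `d(f⁻¹ i, f⁻¹ j) ≤ m' * |i - j|`. -/
def IsAsymptoticRay {V : Type*} (G : SimpleGraph V) : Prop :=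
  ∃ f : V ≃ ℕ, ∃ m m' : ℕ,
    (∀ u v : V, Nat.dist (f u) (f v) ≤ m * G.dist u v) ∧
    (∀ i j : ℕ, G.dist (f.symm i) (f.symm j) ≤ m' * Nat.dist i j)

/-!
(i) ⇒ (ii): along the arrow, `f (aₙ)` moves by at most `m` per step and is unbounded
(`f ∘ a` is injective), so every natural number lies within `m + f (a₀)` of some `f (aₙ)`;
pull this back with `f⁻¹`.

(ii) ⇒ (iii): if `u ∈ S(a₀, n)` is within `r` of `a_k`, then `|k - n| ≤ r`, hence
`S(a₀, n) ⊆ B(aₙ, 2r)`.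

(iii) ⇒ (i): every vertex `v` lies within `2α` of `a_{d(a₀,v)}`, so each sphere `S(a₀, k)`
sits in `B(a_k, 2α)` and has at most `N = (s+1)^{2α}` elements. Enumerating `V` sphere by
sphere gives a bijection `f : V → ℕ` with `|f u - f v| ≤ N (|d(a₀,u) - d(a₀,v)| + 1)`, which
is at most `2N d(u,v)`. Conversely, since every sphere contains a vertex of the arrow, two
consecutive vertices of the enumeration lie in equal or adjacent spheres, hence at distance at
most `4α + 1`.
-/

open Function

theorem exists_natDist_le_of_bounded_steps {b : ℕ → ℕ} {m : ℕ} (hstep : ∀ k, b (k + 1) ≤ b k + m)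
    (hunb : ∀ i, ∃ k, i ≤ b k) (i : ℕ) : ∃ k, Nat.dist i (b k) ≤ m + b 0 := by
  classical
  obtain ⟨k, hk, hmin⟩ : ∃ k, i ≤ b k ∧ ∀ j < k, b j < i :=
    ⟨Nat.find (hunb i), Nat.find_spec (hunb i), fun j hj ↦ not_le.mp (Nat.find_min (hunb i) hj)⟩
  refine ⟨k, ?_⟩
  unfold Nat.dist
  cases k with
  | zero => omega
  | succ j => have := hstep j; have := hmin j (Nat.lt_succ_self j); omega

theorem exists_equiv_nat_natDist_le_of_injective {V : Type*} [Infinite V] {c : V → ℕ}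
    (hc : Injective c) :
    ∃ e : V ≃ ℕ, (∀ u v, c u < c v → e u < e v) ∧
      ∀ u v, Nat.dist (e u) (e v) ≤ Nat.dist (c u) (c v) := by
  classical
  let p : ℕ → Prop := (· ∈ Set.range c)
  have hp : (Set.ofPred p).Infinite := Set.infinite_range_of_injective hc
  have hbij : Bijective fun v ↦ Nat.count p (c v) := by
    refine ⟨fun u v huv ↦ hc (Nat.count_injective ⟨u, rfl⟩ ⟨v, rfl⟩ huv), fun n ↦ ?_⟩
    obtain ⟨v, hv⟩ := Nat.nth_mem_of_infinite hp n
    exact ⟨v, by simp only [hv, Nat.count_nth_of_infinite hp]⟩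
  have hlt : ∀ u v, c u < c v → Nat.count p (c u) < Nat.count p (c v) :=
    fun u _ h ↦ Nat.count_strict_mono ⟨u, rfl⟩ h
  have hdist : ∀ u v, c u ≤ c v →
      Nat.dist (Nat.count p (c u)) (Nat.count p (c v)) ≤ Nat.dist (c u) (c v) := by
    intro u v h
    obtain ⟨d, hd⟩ := Nat.exists_eq_add_of_le h
    rw [hd, Nat.count_add, Nat.dist_eq_sub_of_le (Nat.le_add_right _ _),
      Nat.dist_eq_sub_of_le (Nat.le_add_right _ _)]
    simpa using Nat.count_le _
  refine ⟨Equiv.ofBijective _ hbij, hlt, fun u v ↦ ?_⟩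
  rcases le_total (c u) (c v) with h | h
  · exact hdist u v h
  · rw [Nat.dist_comm, Nat.dist_comm (c u)]
    exact hdist v u h

theorem exists_injective_nat_of_encard_fiber_le {V : Type*} {h : V → ℕ} {N : ℕ}
    (hN : ∀ k, (h ⁻¹' {k}).encard ≤ N) :
    ∃ c : V → ℕ, Injective c ∧ ∀ v, N * h v ≤ c v ∧ c v < N * (h v + 1) := by
  have hIio : (Set.Iio N).encard = N := by
    rw [← Finset.coe_range, Set.encard_coe_eq_coe_finsetCard, Finset.card_range]
  choose φ hφN hφinj using fun k ↦
    (Set.finite_of_encard_le_coe (hN k)).exists_injOn_of_encard_le (hIio ▸ hN k)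
  have hφ : ∀ v, φ (h v) v < N := fun v ↦ hφN (h v) rfl
  refine ⟨fun v ↦ N * h v + φ (h v) v, fun u v huv ↦ ?_, fun v ↦ ⟨Nat.le_add_right _ _, ?_⟩⟩
  · have hhuv : h u = h v := by
      have := hφ u
      have := hφ v
      apply le_antisymm <;> by_contra! hlt <;> nlinarith
    simp only [hhuv, add_right_inj] at huv
    exact hφinj (h v) hhuv rfl huv
  · rw [mul_add_one]
    exact Nat.add_lt_add_left (hφ v) _

theorem exists_equiv_nat_of_encard_fiber_le {V : Type*} [Infinite V] {h : V → ℕ} {N : ℕ}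
    (hN : ∀ k, (h ⁻¹' {k}).encard ≤ N) :
    ∃ e : V ≃ ℕ, (∀ u v, h u < h v → e u < e v) ∧
      ∀ u v, Nat.dist (e u) (e v) ≤ N * (Nat.dist (h u) (h v) + 1) := by
  obtain ⟨c, hc, hcN⟩ := exists_injective_nat_of_encard_fiber_le hN
  obtain ⟨e, he_lt, he_dist⟩ := exists_equiv_nat_natDist_le_of_injective hc
  have hc_lt : ∀ u v, h u < h v → c u < c v := fun u v huv ↦
    calc c u < N * (h u + 1) := (hcN u).2
      _ ≤ N * h v := Nat.mul_le_mul_left _ huv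
      _ ≤ c v := (hcN v).1
  refine ⟨e, fun u v huv ↦ he_lt u v (hc_lt u v huv), fun u v ↦ (he_dist u v).trans ?_⟩
  wlog huv : h u ≤ h v generalizing u v
  · rw [Nat.dist_comm, Nat.dist_comm (h u)]
    exact this v u (le_of_not_ge huv)
  obtain ⟨d, hd⟩ := Nat.exists_eq_add_of_le huv
  have hu := hcN u
  have hv := hcN v
  rw [hd] at hv
  rw [hd, Nat.dist_eq_sub_of_le (Nat.le_add_right _ _), Nat.add_sub_cancel_left]
  simp only [mul_add, mul_one] at hu hv ⊢
  unfold Nat.dist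
  omega

theorem Equiv.natDist_comp_symm_succ_le_one {V : Type*} {h : V → ℕ} (hh : Surjective h)
    (e : V ≃ ℕ) (he : ∀ u v, h u < h v → e u < e v) (i : ℕ) :
    Nat.dist (h (e.symm i)) (h (e.symm (i + 1))) ≤ 1 := by
  have hle : h (e.symm i) ≤ h (e.symm (i + 1)) := by
    by_contra! hlt
    have := he _ _ hlt
    simp at this
  obtain ⟨w, hw⟩ := hh (h (e.symm i) + 1)
  have : ¬ h (e.symm i) + 1 < h (e.symm (i + 1)) := fun hlt ↦ by
    have h₁ := he _ _ (hw ▸ Nat.lt_succ_self _ : h (e.symm i) < h w)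
    have h₂ := he _ _ (hw ▸ hlt : h w < h (e.symm (i + 1)))
    simp only [Equiv.apply_symm_apply] at h₁ h₂
    omega
  unfold Nat.dist
  omega

namespace SimpleGraph

variable {V : Type*} {G : SimpleGraph V}

theorem exists_adj_dist_le_of_dist_eq_succ {x v : V} {n : ℕ} (h : G.dist x v = n + 1) :
    ∃ u, G.Adj u v ∧ G.dist x u ≤ n := by
  have hne : G.dist v x ≠ 0 := by rw [dist_comm, h]; exact n.succ_ne_zero
  obtain ⟨p, hp⟩ := exists_walk_of_dist_ne_zero hne
  rw [dist_comm, h] at hp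
  cases p with
  | nil => simp at hp
  | cons hadj q =>
    rw [Walk.length_cons, Nat.add_right_cancel_iff] at hp
    exact ⟨_, hadj.symm, dist_comm (G := G) ▸ hp ▸ dist_le q⟩

theorem Connected.encard_setOf_dist_le_le (hG : G.Connected) {s : ℕ}
    (hdeg : ∀ v, (G.neighborSet v).encard ≤ s) (x : V) (n : ℕ) :
    {v | G.dist x v ≤ n}.encard ≤ ((s + 1) ^ n : ℕ) := by
  classical
  suffices ∃ F : Finset V, {v | G.dist x v ≤ n} ⊆ F ∧ F.card ≤ (s + 1) ^ n by
    obtain ⟨F, hsub, hcard⟩ := this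
    refine (Set.encard_le_encard hsub).trans ?_
    rw [Set.encard_coe_eq_coe_finsetCard]
    exact_mod_cast hcard
  induction n with
  | zero =>
    refine ⟨{x}, fun v hv ↦ ?_, by simp⟩
    simp [(hG.dist_eq_zero_iff.mp (Nat.le_zero.mp hv)).symm]
  | succ n ih =>
    obtain ⟨F, hsub, hcard⟩ := ih
    have hfin : ∀ u, (G.neighborSet u).Finite := fun u ↦ Set.finite_of_encard_le_coe (hdeg u)
    refine ⟨F.biUnion fun u ↦ insert u (hfin u).toFinset, fun v hv ↦ ?_, ?_⟩
    · simp only [Finset.coe_biUnion, Finset.coe_insert, Set.Finite.coe_toFinset, Set.mem_iUnion,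
        Set.mem_insert_iff, mem_neighborSet, exists_prop]
      rcases Nat.lt_or_eq_of_le hv with hlt | heq
      · exact ⟨v, hsub (Nat.le_of_lt_succ hlt), Or.inl rfl⟩
      · obtain ⟨u, hadj, hu⟩ := exists_adj_dist_le_of_dist_eq_succ heq
        exact ⟨u, hsub hu, Or.inr hadj⟩
    · have hnbr : ∀ u, (hfin u).toFinset.card ≤ s := fun u ↦ by
        have := hdeg u
        rwa [(hfin u).encard_eq_coe_toFinset_card, Nat.cast_le] at this
      calc (F.biUnion fun u ↦ insert u (hfin u).toFinset).card
          ≤ F.card * (s + 1) := Finset.card_biUnion_le_card_mul _ _ _ fun u _ ↦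
            (Finset.card_insert_le _ _).trans (Nat.succ_le_succ (hnbr u))
        _ ≤ (s + 1) ^ (n + 1) := by rw [pow_succ]; exact Nat.mul_le_mul_right _ hcard

theorem Connected.natDist_dist_le (hG : G.Connected) (x u v : V) :
    Nat.dist (G.dist x u) (G.dist x v) ≤ G.dist u v := by
  have := hG.dist_triangle (u := x) (v := u) (w := v)
  have := hG.dist_triangle (u := x) (v := v) (w := u)
  rw [dist_comm (u := v)] at this
  unfold Nat.dist
  omega

theorem Connected.dist_le_mul_natDist (hG : G.Connected) {p : ℕ → V} {C : ℕ}
    (hp : ∀ i, G.dist (p i) (p (i + 1)) ≤ C) (i j : ℕ) :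
    G.dist (p i) (p j) ≤ C * Nat.dist i j := by
  wlog hij : i ≤ j generalizing i j
  · rw [dist_comm, Nat.dist_comm]
    exact this j i (le_of_not_ge hij)
  obtain ⟨t, rfl⟩ := Nat.exists_eq_add_of_le hij
  rw [Nat.dist_eq_sub_of_le hij, Nat.add_sub_cancel_left]
  induction t with
  | zero => simp
  | succ t ih =>
    calc G.dist (p i) (p (i + (t + 1)))
        ≤ G.dist (p i) (p (i + t)) + G.dist (p (i + t)) (p (i + t + 1)) := hG.dist_triangle
      _ ≤ C * t + C := add_le_add (ih (Nat.le_add_right _ _)) (hp _)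
      _ = C * (t + 1) := by ring

end SimpleGraph

namespace IsArrow

variable {V : Type*} {G : SimpleGraph V} {a : ℕ → V}

theorem dist_zero_left (ha : IsArrow G a) (n : ℕ) : G.dist (a 0) (a n) = n := (ha.2 n).2

theorem dist_le (hG : G.Connected) (ha : IsArrow G a) (i j : ℕ) :
    G.dist (a i) (a j) ≤ Nat.dist i j := by
  simpa using hG.dist_le_mul_natDist (C := 1)
    (fun n ↦ (SimpleGraph.dist_eq_one_iff_adj.mpr (ha.2 n).1).le) i j

theorem exists_dist_le_of_isAsymptoticRay (ha : IsArrow G a)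
    (hray : IsAsymptoticRay G) : ∃ r : ℕ, ∀ v : V, ∃ n : ℕ, G.dist v (a n) ≤ r := by
  obtain ⟨f, m, m', hf, hf_symm⟩ := hray
  have hstep : ∀ k, f (a (k + 1)) ≤ f (a k) + m := fun k ↦ by
    have := hf (a k) (a (k + 1))
    rw [SimpleGraph.dist_eq_one_iff_adj.mpr (ha.2 k).1, mul_one] at this
    unfold Nat.dist at this
    omega
  have hunb : ∀ i, ∃ k, i ≤ f (a k) := fun i ↦
    ((f.injective.comp ha.1).nat_tendsto_atTop.eventually_ge_atTop i).exists
  refine ⟨m' * (m + f (a 0)), fun v ↦ ?_⟩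
  obtain ⟨k, hk⟩ := exists_natDist_le_of_bounded_steps hstep hunb (f v)
  refine ⟨k, ?_⟩
  calc G.dist v (a k) = G.dist (f.symm (f v)) (f.symm (f (a k))) := by simp
    _ ≤ m' * Nat.dist (f v) (f (a k)) := hf_symm _ _
    _ ≤ m' * (m + f (a 0)) := Nat.mul_le_mul_left _ hk

theorem sphere_bounded_of_exists_dist_le (hG : G.Connected) (ha : IsArrow G a)
    (hr : ∃ r : ℕ, ∀ v : V, ∃ n : ℕ, G.dist v (a n) ≤ r) :
    ∃ α : ℕ, ∀ n : ℕ, ∃ x : V, ∀ u : V, G.dist u (a 0) = n → G.dist u x ≤ α := by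
  obtain ⟨r, hr⟩ := hr
  refine ⟨2 * r, fun n ↦ ⟨a n, fun u hu ↦ ?_⟩⟩
  obtain ⟨k, hk⟩ := hr u
  have hkn : Nat.dist k n ≤ r := by
    have := hG.natDist_dist_le (a 0) (a k) u
    rw [ha.dist_zero_left, SimpleGraph.dist_comm, hu, SimpleGraph.dist_comm] at this
    exact this.trans hk
  calc G.dist u (a n) ≤ G.dist u (a k) + G.dist (a k) (a n) := hG.dist_triangle
    _ ≤ r + r := add_le_add hk ((ha.dist_le hG k n).trans hkn)
    _ = 2 * r := (two_mul r).symm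

theorem dist_arrow_le_of_sphere_bounded (hG : G.Connected) (ha : IsArrow G a) {α : ℕ}
    (hα : ∀ n : ℕ, ∃ x : V, ∀ u : V, G.dist u (a 0) = n → G.dist u x ≤ α) (v : V) :
    G.dist v (a (G.dist (a 0) v)) ≤ 2 * α := by
  obtain ⟨x, hx⟩ := hα (G.dist (a 0) v)
  calc G.dist v (a (G.dist (a 0) v)) ≤ G.dist v x + G.dist x (a (G.dist (a 0) v)) :=
        hG.dist_triangle
    _ ≤ α + α := add_le_add (hx v SimpleGraph.dist_comm)
        (SimpleGraph.dist_comm.trans_le (hx _ (by rw [SimpleGraph.dist_comm, ha.dist_zero_left])))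
    _ = 2 * α := (two_mul α).symm

theorem dist_le_of_dist_arrow_le (hG : G.Connected) (ha : IsArrow G a) {R : ℕ}
    (hR : ∀ v, G.dist v (a (G.dist (a 0) v)) ≤ R) (u v : V) :
    G.dist u v ≤ 2 * R + Nat.dist (G.dist (a 0) u) (G.dist (a 0) v) := by
  set p := G.dist (a 0) u
  set q := G.dist (a 0) v
  calc G.dist u v ≤ G.dist u (a p) + G.dist (a p) v := hG.dist_triangle
    _ ≤ G.dist u (a p) + (G.dist (a p) (a q) + G.dist (a q) v) := by
        gcongr
        exact hG.dist_triangle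
    _ ≤ R + (Nat.dist p q + R) := by
        gcongr
        exacts [hR u, ha.dist_le hG p q, SimpleGraph.dist_comm.trans_le (hR v)]
    _ = 2 * R + Nat.dist p q := by ring

theorem isAsymptoticRay_of_sphere_bounded [Infinite V] (hG : G.Connected) {s : ℕ}
    (hdeg : ∀ v, (G.neighborSet v).encard ≤ s) (ha : IsArrow G a)
    (hbdd : ∃ α : ℕ, ∀ n : ℕ, ∃ x : V, ∀ u : V, G.dist u (a 0) = n → G.dist u x ≤ α) :
    IsAsymptoticRay G := by
  obtain ⟨α, hα⟩ := hbdd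
  have hnear := ha.dist_arrow_le_of_sphere_bounded hG hα
  have hfiber : ∀ k, ((G.dist (a 0)) ⁻¹' {k}).encard ≤ ((s + 1) ^ (2 * α) : ℕ) := fun k ↦
    (Set.encard_le_encard fun v (hv : G.dist (a 0) v = k) ↦ by
      rw [Set.mem_ofPred, SimpleGraph.dist_comm, ← hv]; exact hnear v).trans
      (hG.encard_setOf_dist_le_le hdeg (a k) (2 * α))
  obtain ⟨e, he_lt, he_dist⟩ := exists_equiv_nat_of_encard_fiber_le hfiber
  set N := (s + 1) ^ (2 * α)
  refine ⟨e, 2 * N, 4 * α + 1, fun u v ↦ ?_, ?_⟩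
  · rcases eq_or_ne u v with rfl | huv
    · simp
    calc Nat.dist (e u) (e v) ≤ N * (Nat.dist (G.dist (a 0) u) (G.dist (a 0) v) + 1) :=
          he_dist u v
      _ ≤ N * (G.dist u v + G.dist u v) :=
          Nat.mul_le_mul_left _ (add_le_add (hG.natDist_dist_le _ _ _) (hG.pos_dist_of_ne huv))
      _ = 2 * N * G.dist u v := by ring
  · refine hG.dist_le_mul_natDist fun i ↦ ?_
    have := Equiv.natDist_comp_symm_succ_le_one (fun k ↦ ⟨a k, ha.dist_zero_left k⟩) e he_lt i
    have := ha.dist_le_of_dist_arrow_le hG hnear (e.symm i) (e.symm (i + 1))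
    omega

end IsArrow

/-- For an infinite connected graph `G` with all degrees at most `s` and an
arrow `(aₙ)`, TFAE: (i) `G` is an asymptotic ray; (ii) `V = B(A, r)` for some `r`, where
`A = {aₙ : n ∈ ℕ}`; (iii) the family of spheres `{S(a₀, n) : n ∈ ℕ}` is uniformly
bounded. -/
theorem asymptoticRay_tfae {V : Type*} [Infinite V] (G : SimpleGraph V)
    (hG : G.Connected) (s : ℕ) (hdeg : ∀ v : V, (G.neighborSet v).encard ≤ (s : ℕ∞))
    (a : ℕ → V) (ha : IsArrow G a) :
    [IsAsymptoticRay G,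
     (∃ r : ℕ, ∀ v : V, ∃ n : ℕ, G.dist v (a n) ≤ r),
     (∃ α : ℕ, ∀ n : ℕ, ∃ x : V, ∀ u : V, G.dist u (a 0) = n → G.dist u x ≤ α)].TFAE := by
  tfae_have 1 → 2 := ha.exists_dist_le_of_isAsymptoticRay
  tfae_have 2 → 3 := ha.sphere_bounded_of_exists_dist_le hG
  tfae_have 3 → 1 := ha.isAsymptoticRay_of_sphere_bounded hG hdeg
  tfae_finish
end

section
/- Let Γ = (V,E) be an infinite connected simple graph with path metric d which is an asymptotic ray, let (aₙ)ₙ∈ℕ be an arrow in Γ, and let A = {aₙ : n ∈ ℕ}. Then there exists a natural number r such that V = B(A,r), i.e., every vertex of Γ lies at distance at most r from some vertex aₙ. -/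
namespace Nat

theorem exists_dist_le_of_dist_succ_le {b : ℕ → ℕ} {m : ℕ}
    (hstep : ∀ n, Nat.dist (b n) (b (n + 1)) ≤ m) {k : ℕ} (hk : b 0 ≤ k) :
    ∀ N, k ≤ b N → ∃ n, Nat.dist k (b n) ≤ m
  | 0, hkN => ⟨0, by rw [show k = b 0 by omega, Nat.dist_self]; exact Nat.zero_le m⟩
  | N + 1, hkN => by
    by_cases hkN' : k ≤ b N
    · exact exists_dist_le_of_dist_succ_le hstep hk N hkN'
    · refine ⟨N + 1, ?_⟩
      have := hstep N
      simp only [Nat.dist] at this ⊢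
      omega

theorem exists_le_of_le_mul_dist {b : ℕ → ℕ} {c : ℕ}
    (hgrowth : ∀ n, n ≤ c * Nat.dist (b 0) (b n)) (k : ℕ) : ∃ N, k ≤ b N := by
  by_contra! hbdd
  have hdist : Nat.dist (b 0) (b (c * k + 1)) ≤ k := by
    have := hbdd 0
    have := hbdd (c * k + 1)
    simp only [Nat.dist]
    omega
  have := (hgrowth (c * k + 1)).trans (Nat.mul_le_mul_left c hdist)
  omega

theorem exists_dist_le_add_of_dist_succ_le {b : ℕ → ℕ} {m : ℕ}
    (hstep : ∀ n, Nat.dist (b n) (b (n + 1)) ≤ m) (hunbdd : ∀ k, ∃ N, k ≤ b N) (k : ℕ) :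
    ∃ n, Nat.dist k (b n) ≤ b 0 + m := by
  rcases le_or_gt (b 0) k with hk | hk
  · obtain ⟨N, hN⟩ := hunbdd k
    obtain ⟨n, hn⟩ := exists_dist_le_of_dist_succ_le hstep hk N hN
    exact ⟨n, hn.trans (Nat.le_add_left m (b 0))⟩
  · exact ⟨0, by simp only [Nat.dist]; omega⟩

end Nat

namespace IsArrow

variable {V : Type*} {G : SimpleGraph V} {a : ℕ → V}

theorem dist_apply_succ_le (ha : IsArrow G a) {f : V → ℕ} {m : ℕ}
    (hf : ∀ u v, Nat.dist (f u) (f v) ≤ m * G.dist u v) (n : ℕ) :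
    Nat.dist (f (a n)) (f (a (n + 1))) ≤ m := by
  simpa [SimpleGraph.dist_eq_one_iff_adj.mpr (ha.2 n).1] using hf (a n) (a (n + 1))

theorem le_mul_dist_apply (ha : IsArrow G a) {f : V → ℕ} {c : ℕ}
    (hf : ∀ u v, G.dist u v ≤ c * Nat.dist (f u) (f v)) (n : ℕ) :
    n ≤ c * Nat.dist (f (a 0)) (f (a n)) := by
  simpa only [(ha.2 n).2] using hf (a 0) (a n)

end IsArrow

theorem ball_around_arrow_of_asymptoticRay_general {V : Type*} (G : SimpleGraph V)
    (hray : IsAsymptoticRay G) (a : ℕ → V) (ha : IsArrow G a) :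
    ∃ r : ℕ, ∀ v : V, ∃ n : ℕ, G.dist v (a n) ≤ r := by
  obtain ⟨f, m, m', hf, hf_symm⟩ := hray
  have hdist_le : ∀ u v, G.dist u v ≤ m' * Nat.dist (f u) (f v) := fun u v => by
    simpa using hf_symm (f u) (f v)
  have hunbdd :=
    Nat.exists_le_of_le_mul_dist (b := fun n => f (a n)) (ha.le_mul_dist_apply hdist_le)
  refine ⟨m' * (f (a 0) + m), fun v => ?_⟩
  obtain ⟨n, hn⟩ :=
    Nat.exists_dist_le_add_of_dist_succ_le (ha.dist_apply_succ_le hf) hunbdd (f v)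
  exact ⟨n, (hdist_le v (a n)).trans (Nat.mul_le_mul_left m' hn)⟩

/-- If an infinite connected graph `G` is an asymptotic ray and `(aₙ)` is an
arrow in `G`, then there is `r : ℕ` such that every vertex lies at distance at most `r`
from some `aₙ`. -/
theorem ball_around_arrow_of_asymptoticRay {V : Type*} [Infinite V] (G : SimpleGraph V)
    (hG : G.Connected) (hray : IsAsymptoticRay G) (a : ℕ → V) (ha : IsArrow G a) :
    ∃ r : ℕ, ∀ v : V, ∃ n : ℕ, G.dist v (a n) ≤ r :=
  ball_around_arrow_of_asymptoticRay_general G hray a ha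
end

section
/- Let Γ = (V,E) be an infinite connected simple graph with path metric d, let (aₙ)ₙ∈ℕ be an arrow in Γ and A = {aₙ : n ∈ ℕ}, and suppose there is a natural number r with V = B(A,r). Then for every n ∈ ℕ, S(a₀,n) ⊆ B(aₙ, 2r); in particular the family {S(a₀,n) : n ∈ ℕ} is uniformly bounded. -/
/-!
A vertex `u` with `d(u, a₀) = n` lies within `r` of some `aₘ`. Since `d(a₀, aₘ) = m`, the
triangle inequality through `a₀` gives `|n - m| ≤ r`, and walking along the arrow gives
`d(aₘ, aₙ) ≤ |m - n|`; hence `d(u, aₙ) ≤ 2r`.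
-/

namespace SimpleGraph

variable {V : Type*} {G : SimpleGraph V}

lemma dist_add_le_of_adj_succ {f : ℕ → V} (hf : ∀ i, G.Adj (f i) (f (i + 1))) (m k : ℕ) :
    G.dist (f m) (f (m + k)) ≤ k := by
  induction k with
  | zero => simp
  | succ k ih =>
    calc G.dist (f m) (f (m + (k + 1)))
        ≤ G.dist (f m) (f (m + k)) + G.dist (f (m + k)) (f (m + k + 1)) :=
          (hf (m + k)).reachable.dist_triangle_right _
      _ ≤ k + 1 := by rw [dist_eq_one_iff_adj.mpr (hf _)]; omega

lemma dist_le_of_adj_succ {f : ℕ → V} (hf : ∀ i, G.Adj (f i) (f (i + 1))) (m n : ℕ) :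
    G.dist (f m) (f n) ≤ m - n + (n - m) := by
  rcases le_total m n with h | h
  · obtain ⟨k, rfl⟩ := Nat.exists_eq_add_of_le h
    simpa using dist_add_le_of_adj_succ hf m k
  · obtain ⟨k, rfl⟩ := Nat.exists_eq_add_of_le h
    simpa [dist_comm] using dist_add_le_of_adj_succ hf n k

end SimpleGraph

open SimpleGraph

theorem IsArrow.dist_le_two_mul_of_dist_eq {V : Type*} {G : SimpleGraph V} {a : ℕ → V}
    (hG : G.Connected) (ha : IsArrow G a) {r : ℕ} (hr : ∀ v, ∃ m, G.dist v (a m) ≤ r)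
    {n : ℕ} {u : V} (hu : G.dist u (a 0) = n) : G.dist u (a n) ≤ 2 * r := by
  obtain ⟨m, hm⟩ := hr u
  have hdist_m : G.dist (a 0) (a m) = m := (ha.2 m).2
  have hn_le : n ≤ r + m := by
    have : G.dist u (a 0) ≤ G.dist u (a m) + G.dist (a m) (a 0) := hG.dist_triangle
    rw [dist_comm (u := a m) (v := a 0)] at this
    omega
  have hm_le : m ≤ n + r := by
    have : G.dist (a 0) (a m) ≤ G.dist (a 0) u + G.dist u (a m) := hG.dist_triangle
    rw [dist_comm (u := a 0) (v := u)] at this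
    omega
  calc G.dist u (a n) ≤ G.dist u (a m) + G.dist (a m) (a n) := hG.dist_triangle
    _ ≤ r + (m - n + (n - m)) := add_le_add hm (dist_le_of_adj_succ (fun i ↦ (ha.2 i).1) m n)
    _ ≤ 2 * r := by omega

theorem sphere_subset_ball_of_net_general {V : Type*} (G : SimpleGraph V)
    (hG : G.Connected) (a : ℕ → V) (ha : IsArrow G a) (r : ℕ)
    (hr : ∀ v : V, ∃ n : ℕ, G.dist v (a n) ≤ r) :
    (∀ n : ℕ, ∀ u : V, G.dist u (a 0) = n → G.dist u (a n) ≤ 2 * r) ∧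
    (∃ α : ℕ, ∀ n : ℕ, ∃ x : V, ∀ u : V, G.dist u (a 0) = n → G.dist u x ≤ α) := by
  have hsphere : ∀ n u, G.dist u (a 0) = n → G.dist u (a n) ≤ 2 * r :=
    fun _ _ hu ↦ ha.dist_le_two_mul_of_dist_eq hG hr hu
  exact ⟨hsphere, 2 * r, fun n ↦ ⟨a n, hsphere n⟩⟩

/-- If `(aₙ)` is an arrow in an infinite connected graph `G` and
`V = B(A, r)` where `A = {aₙ : n ∈ ℕ}`, then `S(a₀, n) ⊆ B(aₙ, 2r)` for every `n`;
in particular the family of spheres `{S(a₀, n) : n ∈ ℕ}` is uniformly bounded. -/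
theorem sphere_subset_ball_of_net {V : Type*} [Infinite V] (G : SimpleGraph V)
    (hG : G.Connected) (a : ℕ → V) (ha : IsArrow G a) (r : ℕ)
    (hr : ∀ v : V, ∃ n : ℕ, G.dist v (a n) ≤ r) :
    (∀ n : ℕ, ∀ u : V, G.dist u (a 0) = n → G.dist u (a n) ≤ 2 * r) ∧
    (∃ α : ℕ, ∀ n : ℕ, ∃ x : V, ∀ u : V, G.dist u (a 0) = n → G.dist u x ≤ α) :=
  sphere_subset_ball_of_net_general G hG a ha r hr
end

section
/- Let T = (V,E) be an infinite tree (connected acyclic simple graph) with path metric d, let s be a natural number such that ρ(v) ≤ s for all v ∈ V, let (aₙ)ₙ∈ℕ be an arrow in T, and suppose T is an asymptotic ray. Then there exists a natural number t such that the connected component T(aₙ) of aₙ in the graph obtained from T by deleting all edges (aₖ, a_{k+1}), k ∈ ℕ, has at most t vertices, for every n ∈ ℕ. -/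
/-- The vertex set of `T(aₙ)`: the connected component of `a n` in the graph obtained
from `G` by deleting the edges `(aₖ, a_{k+1})`, `k ∈ ℕ` (but not the vertices). -/
def arrowComponent {V : Type*} (G : SimpleGraph V) (a : ℕ → V) (n : ℕ) : Set V :=
  {v : V | (G.deleteEdges {e : Sym2 V | ∃ k : ℕ, e = s(a k, a (k + 1))}).Reachable (a n) v}

/-!
The bijection `f : V ≃ ℕ` of the asymptotic ray moves by at most `m` along each arrow edge and,
being injective, is unbounded along the arrow; a discrete intermediate value argument then puts
every vertex within a fixed distance `R` of the arrow. In a tree, every walk leaving `T(aₙ)` passes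
through `aₙ`, so all of `T(aₙ)` lies within distance `R` of `aₙ`. Since `f` is injective and
`m`-Lipschitz, a ball of radius `R` has at most `2mR + 1` vertices.
-/

open SimpleGraph Function

theorem Nat.exists_dist_le_of_dist_succ_le_s10 {g : ℕ → ℕ} {M : ℕ}
    (hstep : ∀ k, Nat.dist (g k) (g (k + 1)) ≤ M) (hg : ∀ N, ∃ k, N < g k) {p : ℕ}
    (hp : g 0 ≤ p) : ∃ k, Nat.dist (g k) p ≤ M := by
  classical
  have hex : ∃ k, p ≤ g k := (hg p).imp fun _ => le_of_lt
  have hfound : p ≤ g (Nat.find hex) := Nat.find_spec hex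
  cases hk : Nat.find hex with
  | zero =>
    rw [hk] at hfound
    exact ⟨0, by rw [le_antisymm hp hfound, Nat.dist_self]; exact Nat.zero_le M⟩
  | succ j =>
    have hbefore : g j < p := not_le.1 (Nat.find_min hex (by omega))
    have hjump := hstep j
    rw [hk] at hfound
    refine ⟨j + 1, ?_⟩
    simp only [Nat.dist] at hjump ⊢
    omega

section

variable {V : Type*}

theorem encard_setOf_dist_le_of_lipschitz {G : SimpleGraph V} {f : V → ℕ} {m : ℕ}
    (hf : Injective f) (hlip : ∀ u v, Nat.dist (f u) (f v) ≤ m * G.dist u v) (x : V) (R : ℕ) :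
    {v | G.dist x v ≤ R}.encard ≤ (2 * m * R + 1 : ℕ) := by
  have hmaps : f '' {v | G.dist x v ≤ R} ⊆ Finset.Icc (f x - m * R) (f x + m * R) := by
    rintro _ ⟨v, hv, rfl⟩
    have hfv : Nat.dist (f x) (f v) ≤ m * R :=
      (hlip x v).trans (Nat.mul_le_mul_left _ hv)
    simp only [Nat.dist] at hfv
    simp only [Finset.coe_Icc, Set.mem_Icc]
    omega
  calc {v | G.dist x v ≤ R}.encard = (f '' {v | G.dist x v ≤ R}).encard :=
        (hf.encard_image _).symm
    _ ≤ ((Finset.Icc (f x - m * R) (f x + m * R) : Finset ℕ) : Set ℕ).encard :=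
        Set.encard_mono hmaps
    _ = (Finset.Icc (f x - m * R) (f x + m * R)).card := Set.encard_coe_eq_coe_finsetCard _
    _ ≤ (2 * m * R + 1 : ℕ) := by
        rw [Nat.cast_le, Nat.card_Icc]
        have : 2 * m * R = m * R + m * R := by ring
        omega

theorem IsAsymptoticRay.exists_forall_dist_le {G : SimpleGraph V} (hG : IsAsymptoticRay G)
    {a : ℕ → V} (hinj : Injective a) (hadj : ∀ k, G.Adj (a k) (a (k + 1))) :
    ∃ R, ∀ v, ∃ k, G.dist v (a k) ≤ R := by
  obtain ⟨f, m, m', hf, hf'⟩ := hG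
  have hdist : ∀ u v, G.dist u v ≤ m' * Nat.dist (f u) (f v) := fun u v => by
    simpa using hf' (f u) (f v)
  have hstep : ∀ k, Nat.dist (f (a k)) (f (a (k + 1))) ≤ m := fun k => by
    simpa [dist_eq_one_iff_adj.2 (hadj k)] using hf (a k) (a (k + 1))
  have hunbounded : ∀ N, ∃ k, N < f (a k) := fun N => by
    obtain ⟨_, ⟨k, rfl⟩, hk⟩ :=
      (Set.infinite_range_of_injective (f.injective.comp hinj)).exists_gt N
    exact ⟨k, hk⟩
  refine ⟨m' * (m + f (a 0)), fun v => ?_⟩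
  rcases le_total (f (a 0)) (f v) with h | h
  · obtain ⟨k, hk⟩ := Nat.exists_dist_le_of_dist_succ_le_s10 hstep hunbounded h
    refine ⟨k, (hdist v (a k)).trans (Nat.mul_le_mul_left _ ?_)⟩
    rw [Nat.dist_comm]
    omega
  · refine ⟨0, (hdist v (a 0)).trans (Nat.mul_le_mul_left _ ?_)⟩
    rw [Nat.dist_eq_sub_of_le h]
    omega

section arrowComponent

variable {T : SimpleGraph V} {a : ℕ → V}

theorem eq_of_apply_mem_arrowComponent (hT : T.IsAcyclic) (hinj : Injective a)
    (hadj : ∀ k, T.Adj (a k) (a (k + 1))) {n k : ℕ} (h : a k ∈ arrowComponent T a n) : k = n := by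
  set H := T.deleteEdges {e : Sym2 V | ∃ k : ℕ, e = s(a k, a (k + 1))}
  suffices hlt : ∀ i j, i < j → ¬ H.Reachable (a i) (a j) by
    rcases lt_trichotomy k n with hkn | hkn | hkn
    · exact absurd h.symm (hlt k n hkn)
    · exact hkn
    · exact absurd h (hlt n k hkn)
  intro i j hij hreach
  set Hᵢ := T.deleteEdges {s(a i, a (i + 1))}
  have hH : H ≤ Hᵢ := deleteEdges_anti (Set.singleton_subset_iff.2 ⟨i, rfl⟩)
  -- Beyond `a (i + 1)` the arrow avoids the bridge `s(a i, a (i + 1))`.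
  have hfollow : ∀ l, i + 1 ≤ l → Hᵢ.Reachable (a (i + 1)) (a l) := by
    intro l hl
    induction l, hl using Nat.le_induction with
    | base => rfl
    | succ l hl ih =>
      refine ih.trans (Adj.reachable ?_)
      rw [deleteEdges_adj, Set.mem_singleton_iff, Sym2.eq_iff]
      refine ⟨hadj l, ?_⟩
      rintro (⟨h₁, -⟩ | ⟨-, h₂⟩)
      · exact absurd (hinj h₁) (by omega)
      · exact absurd (hinj h₂) (by omega)
  exact isAcyclic_iff_forall_adj_isBridge.1 hT (hadj i)
    ((hreach.mono hH).trans (hfollow j hij).symm)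

theorem apply_mem_support_of_mem_arrowComponent (hT : T.IsAcyclic) (hinj : Injective a)
    (hadj : ∀ k, T.Adj (a k) (a (k + 1))) {n : ℕ} {v u : V} (p : T.Walk v u)
    (hv : v ∈ arrowComponent T a n) (hu : u ∉ arrowComponent T a n) : a n ∈ p.support := by
  obtain ⟨d, hd, hfst, hsnd⟩ := p.exists_boundary_dart _ hv hu
  have hdeleted : ∃ k, s(d.fst, d.snd) = s(a k, a (k + 1)) := by
    by_contra hkept
    exact hsnd (hfst.trans (Adj.reachable ((deleteEdges_adj ..).2 ⟨d.adj, hkept⟩)))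
  obtain ⟨k, hk⟩ := hdeleted
  have hfst_eq : d.fst = a n := by
    rcases Sym2.eq_iff.1 hk with ⟨h, -⟩ | ⟨h, -⟩ <;> rw [h] at hfst ⊢ <;>
      rw [eq_of_apply_mem_arrowComponent hT hinj hadj hfst]
  exact hfst_eq ▸ p.dart_fst_mem_support_of_mem_darts hd

theorem dist_le_dist_of_mem_arrowComponent (hT : T.IsTree) (hinj : Injective a)
    (hadj : ∀ k, T.Adj (a k) (a (k + 1))) {n : ℕ} {v : V} (hv : v ∈ arrowComponent T a n)
    (k : ℕ) : T.dist (a n) v ≤ T.dist v (a k) := by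
  classical
  by_cases hkn : k = n
  · rw [hkn, dist_comm]
  have hk : a k ∉ arrowComponent T a n :=
    fun h => hkn (eq_of_apply_mem_arrowComponent hT.isAcyclic hinj hadj h)
  obtain ⟨p, hp⟩ := hT.connected.exists_walk_length_eq_dist v (a k)
  have hmem := apply_mem_support_of_mem_arrowComponent hT.isAcyclic hinj hadj p hv hk
  calc T.dist (a n) v = T.dist v (a n) := dist_comm
    _ ≤ (p.takeUntil (a n) hmem).length := dist_le _
    _ ≤ p.length := p.length_takeUntil_le_length hmem
    _ = T.dist v (a k) := hp

end arrowComponent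

end

theorem tree_components_bounded_of_asymptoticRay_general {V : Type*}
    (T : SimpleGraph V) (hT : T.IsTree)
    (a : ℕ → V) (ha : IsArrow T a) (hray : IsAsymptoticRay T) :
    ∃ t : ℕ, ∀ n : ℕ, (arrowComponent T a n).encard ≤ (t : ℕ∞) := by
  have hadj : ∀ k, T.Adj (a k) (a (k + 1)) := fun k => (ha.2 k).1
  obtain ⟨R, hR⟩ := hray.exists_forall_dist_le ha.1 hadj
  obtain ⟨f, m, -, hf, -⟩ := hray
  refine ⟨2 * m * R + 1, fun n => ?_⟩
  refine (Set.encard_mono fun v hv => ?_).trans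
    (encard_setOf_dist_le_of_lipschitz f.injective hf (a n) R)
  obtain ⟨k, hk⟩ := hR v
  exact (dist_le_dist_of_mem_arrowComponent hT ha.1 hadj hv k).trans hk

/-- If an infinite tree `T` with degrees bounded by `s` carrying an arrow
`(aₙ)` is an asymptotic ray, then the components `T(aₙ)` obtained by deleting the arrow's
edges have uniformly bounded numbers of vertices. -/
theorem tree_components_bounded_of_asymptoticRay {V : Type*} [Infinite V]
    (T : SimpleGraph V) (hT : T.IsTree) (s : ℕ)
    (hdeg : ∀ v : V, (T.neighborSet v).encard ≤ (s : ℕ∞))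
    (a : ℕ → V) (ha : IsArrow T a) (hray : IsAsymptoticRay T) :
    ∃ t : ℕ, ∀ n : ℕ, (arrowComponent T a n).encard ≤ (t : ℕ∞) :=
  tree_components_bounded_of_asymptoticRay_general T hT a ha hray
end
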